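/- Let (C, J, P) be a geometric context and let f : F → h_U be a morphism of sheaves over (C, J) with U ∈ C. Then f is an open immersion if, and only if, f is a monomorphism and there exists a family of morphisms (U_i → U) in C, each lying in P, such that the image of f equals, as a subobject of h_U, the image of the induced morphism ∐_i h_{U_i} → h_U. -/

import Mathlib

open CategoryTheory CategoryTheory.Limits

universe u

namespace GeomCtx

variable {C : Type u} [SmallCategory C]

/-- An arrow `f` of a category is *cartesian* if pullbacks of arbitrary morphisms
along `f` exist. -/
def CartesianArrow {X Y : C} (f : X ⟶ Y) : Prop :=
  ∀ ⦃Z : C⦄ (g : Z ⟶ Y), HasPullback f g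

/-- A family of arrows `(ρ i : Ui i ⟶ X)` is a `J`-covering if the sieve it
generates is a `J`-covering sieve. -/
def IsJCover (J : GrothendieckTopology C) {X : C} {I : Type u} (Ui : I → C)
    (ρ : ∀ i, Ui i ⟶ X) : Prop :=
  Sieve.generate (Presieve.ofArrows Ui ρ) ∈ J X

/-- A Grothendieck pretopology (in the sense that does not presuppose the existence of
all pullbacks in `C`): a collection of covering families consisting of cartesian arrows,
stable under pullback, transitive, and containing the isomorphisms. -/
structure IsPretopology (Cov : ∀ U : C, Set (Presieve U)) : Prop where
  cartesian : ∀ ⦃U : C⦄, ∀ R ∈ Cov U, ∀ ⦃V : C⦄ (f : V ⟶ U), R f → CartesianArrow f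
  pullback_stable : ∀ ⦃U V : C⦄ (g : V ⟶ U), ∀ R ∈ Cov U,
    ∃ S ∈ Cov V, ∀ ⦃W : C⦄ (f : W ⟶ V), S f →
      ∃ (Z : C) (r : Z ⟶ U) (h : W ⟶ Z), R r ∧ IsPullback h f r g
  trans : ∀ ⦃U : C⦄ (R : Presieve U), R ∈ Cov U →
    ∀ (T : ∀ ⦃V : C⦄ ⦃f : V ⟶ U⦄, R f → Presieve V),
      (∀ ⦃V : C⦄ ⦃f : V ⟶ U⦄ (hf : R f), T hf ∈ Cov V) →
      R.bind T ∈ Cov U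
  has_isos : ∀ ⦃U V : C⦄ (f : V ⟶ U) [IsIso f], Presieve.singleton f ∈ Cov U

/-- A Grothendieck topology is generated by a pretopology if its covering sieves are
exactly the sieves containing a sieve generated by a covering family of the pretopology. -/
def GeneratedByPretopology (J : GrothendieckTopology C) : Prop :=
  ∃ Cov : ∀ U : C, Set (Presieve U), IsPretopology Cov ∧
    ∀ (U : C) (S : Sieve U), S ∈ J U ↔ ∃ R ∈ Cov U, Sieve.generate R ≤ S

/-- A *geometric context* `(C, J, P)`: a small category `C` with finite products, a
subcanonical Grothendieck topology `J` generated by a pretopology, and an admissible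
class `P` of arrows of `C` which is `J`-local and locally cartesian, and such that `J`
is `P`-generated. -/
structure IsGeometricContext (J : GrothendieckTopology C) (P : MorphismProperty C) : Prop where
  /-- (GC1) `C` admits finite products. -/
  hasFiniteProducts : HasFiniteProducts C
  /-- (GC2a) `J` is subcanonical: every representable presheaf is a `J`-sheaf. -/
  subcanonical : ∀ U : C, Presheaf.IsSheaf J (yoneda.obj U)
  /-- (GC2b) `J` is generated by a Grothendieck pretopology. -/
  pretopologyGenerated : GeneratedByPretopology J
  /-- (GC3a) `P` contains all identities. -/
  id_mem : ∀ U : C, P (𝟙 U)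
  /-- (GC3b) `P` is stable under base change. -/
  stableUnderBaseChange : ∀ ⦃U' V' U V : C⦄ (f' : U' ⟶ V') (g' : U' ⟶ U)
    (g : V' ⟶ V) (f : U ⟶ V), IsPullback f' g' g f → P f → P f'
  /-- (GC3c) `P` is stable under composition. -/
  stableUnderComposition : ∀ ⦃U V W : C⦄ (f : U ⟶ V) (g : V ⟶ W), P f → P g → P (f ≫ g)
  /-- (GC4) `P` is `J`-local. -/
  jLocal : ∀ ⦃U V : C⦄ (φ : U ⟶ V) ⦃I : Type u⦄ (Ui : I → C) (ρ : ∀ i, Ui i ⟶ U),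
    IsJCover J Ui ρ → (∀ i, P (ρ i)) → (∀ i, P (ρ i ≫ φ)) → P φ
  /-- (GC5) `J` is `P`-generated: every `J`-covering admits a `P`-refinement. -/
  pGenerated : ∀ ⦃U : C⦄ ⦃A : Type u⦄ (Ua : A → C) (ρ : ∀ a, Ua a ⟶ U),
    IsJCover J Ua ρ → ∃ (I : Type u) (Vi : I → C) (φ : ∀ i, Vi i ⟶ U),
      (∀ i, P (φ i)) ∧ ∀ a, ∃ (i : I) (g : Ua a ⟶ Vi i), g ≫ φ i = ρ a
  /-- (GC6) `P` is locally cartesian. -/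
  locallyCartesian : ∀ ⦃U V : C⦄ (φ : U ⟶ V), P φ →
    ∃ (I : Type u) (Ui : I → C) (ρ : ∀ i, Ui i ⟶ U),
      IsJCover J Ui ρ ∧ (∀ i, P (ρ i)) ∧ ∀ i, CartesianArrow (ρ i ≫ φ)

instance instHasColimitsOfShapeDiscreteSheafType {J : GrothendieckTopology C} (I : Type u) :
    HasColimitsOfShape (Discrete I) (Sheaf J (Type u)) :=
  @Sheaf.instHasColimitsOfShape _ _ J _ _ _ _ inferInstance
    (inferInstanceAs (HasColimitsOfShape (Discrete I) (Type u)))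

variable (J : GrothendieckTopology C)

/-- `Subcanonicity` of `J`, phrased concretely. -/
abbrev Subcanonical : Prop := ∀ U : C, Presheaf.IsSheaf J (yoneda.obj U)

/-- The sheaf represented by an object `U` of `C` (for a subcanonical topology). -/
def yo (hs : Subcanonical J) (U : C) : Sheaf J (Type u) :=
  ⟨yoneda.obj U, hs U⟩

/-- The morphism of representable sheaves induced by a morphism of `C`. -/
def yoMap (hs : Subcanonical J) {U V : C} (f : U ⟶ V) : yo J hs U ⟶ yo J hs V :=
  ⟨yoneda.map f⟩

/-- Two morphisms `f : A ⟶ X` and `g : B ⟶ X` of sheaves have the same image, as a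
subobject of `X`: there is a common monomorphism into `X` through which both factor
epimorphically. -/
def SameImage {A B X : Sheaf J (Type u)} (f : A ⟶ X) (g : B ⟶ X) : Prop :=
  ∃ (W : Sheaf J (Type u)) (i : W ⟶ X) (p : A ⟶ W) (q : B ⟶ W),
    Mono i ∧ Epi p ∧ Epi q ∧ p ≫ i = f ∧ q ≫ i = g

variable (P : MorphismProperty C)

/-- A morphism of sheaves `f : F ⟶ H` is an *open immersion* if for every `U : C` and
every morphism `g : h_U ⟶ H`, the projection `F ×_H h_U ⟶ h_U` is a monomorphism and
there is a family of `P`-morphisms `(Ui i ⟶ U)` such that the image of the induced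
morphism `∐ h_{Ui i} ⟶ h_U` coincides, as a subobject of `h_U`, with the image of
`F ×_H h_U ⟶ h_U`. -/
def IsOpenImmersion (hs : Subcanonical J) {F H : Sheaf J (Type u)} (f : F ⟶ H) : Prop :=
  ∀ (U : C) (g : yo J hs U ⟶ H),
    Mono (pullback.snd f g) ∧
    ∃ (I : Type u) (Ui : I → C) (ρ : ∀ i, Ui i ⟶ U),
      (∀ i, P (ρ i)) ∧
      SameImage J (Limits.Sigma.desc fun i => yoMap J hs (ρ i)) (pullback.snd f g)

/-- An *open atlas* of a sheaf `X`: a family of open immersions from representable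
sheaves which is jointly epimorphic. A sheaf admitting an open atlas is an
*elementary scheme*. -/
def IsElementaryScheme (hs : Subcanonical J) (X : Sheaf J (Type u)) : Prop :=
  ∃ (I : Type u) (Ui : I → C) (p : ∀ i, yo J hs (Ui i) ⟶ X),
    (∀ i, IsOpenImmersion J P hs (p i)) ∧ Epi (Limits.Sigma.desc p)

/-- A morphism of sheaves `f : F ⟶ H` is an *`S`-morphism* if for every `U : C` and
every `g : h_U ⟶ H` there is an open atlas `∐ h_{Ui i} ⟶ F ×_H h_U` such that each
induced composite `Ui i ⟶ U` (viewed in `C` via the Yoneda embedding) lies in `S`. -/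
def IsSMorphism (hs : Subcanonical J) (S : MorphismProperty C)
    {F H : Sheaf J (Type u)} (f : F ⟶ H) : Prop :=
  ∀ (U : C) (g : yo J hs U ⟶ H),
    ∃ (I : Type u) (Ui : I → C) (p : ∀ i, yo J hs (Ui i) ⟶ pullback f g),
      (∀ i, IsOpenImmersion J P hs (p i)) ∧ Epi (Limits.Sigma.desc p) ∧
      ∀ i, ∃ ρ : Ui i ⟶ U, yoMap J hs ρ = p i ≫ pullback.snd f g ∧ S ρ

/-- A morphism of sheaves `f : F ⟶ H` is *schematic* if for every `U : C` and every
`g : h_U ⟶ H` the pullback `F ×_H h_U` is an elementary scheme. -/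
def IsSchematic (hs : Subcanonical J) {F H : Sheaf J (Type u)} (f : F ⟶ H) : Prop :=
  ∀ (U : C) (g : yo J hs U ⟶ H), IsElementaryScheme J P hs (pullback f g)

end GeomCtx

namespace GeomCtx

open Opposite

variable {C : Type u} [SmallCategory C] {J : GrothendieckTopology C}

section Aux

variable (hs : Subcanonical J)

lemma yoMap_comp {U V W : C} (a : U ⟶ V) (b : V ⟶ W) :
    yoMap J hs (a ≫ b) = yoMap J hs a ≫ yoMap J hs b :=
  Sheaf.hom_ext (yoneda.map_comp a b)

lemma yoMap_injective {U V : C} : Function.Injective (yoMap J hs : (U ⟶ V) → _) := by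
  intro a b h
  have h' := congrArg InducedCategory.Hom.hom h
  exact yoneda.map_injective h'

lemma yonedaEquiv_val_yoMap_comp {X : Sheaf J (Type u)} {V' V : C} (r : V' ⟶ V)
    (x : yo J hs V ⟶ X) :
    yonedaEquiv ((yoMap J hs r ≫ x).hom) = X.val.map r.op (yonedaEquiv x.hom) := by
  rw [ObjectProperty.FullSubcategory.comp_hom]
  exact (yonedaEquiv_naturality _ _).symm

/-- The sieve of morphisms `r : V' ⟶ V` such that `yoMap r ≫ s` factors through one of
the morphisms `κ i`. -/
def covSieve {I : Type u} {Y : Sheaf J (Type u)} (X : I → Sheaf J (Type u))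
    (κ : ∀ i, X i ⟶ Y) {V : C} (s : yo J hs V ⟶ Y) : Sieve V where
  arrows V' r := ∃ (i : I) (x : yo J hs V' ⟶ X i), x ≫ κ i = yoMap J hs r ≫ s
  downward_closed := by
    rintro V' V'' r ⟨i, x, hx⟩ w
    refine ⟨i, yoMap J hs w ≫ x, ?_⟩
    rw [Category.assoc, hx, ← Category.assoc, ← yoMap_comp]

lemma epi_desc_of_covSieve {I : Type u} {Y : Sheaf J (Type u)} {X : I → Sheaf J (Type u)}
    (κ : ∀ i, X i ⟶ Y)
    (h : ∀ (V : C) (s : yo J hs V ⟶ Y), covSieve hs X κ s ∈ J V) :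
    Epi (Limits.Sigma.desc κ) := by
  rw [← Sheaf.isLocallySurjective_iff_epi]
  refine ⟨fun {V} y => ?_⟩
  refine J.superset_covering ?_ (h V ⟨yonedaEquiv.symm y⟩)
  rintro V' r ⟨i, x, hx⟩
  refine ⟨yonedaEquiv ((x ≫ Limits.Sigma.ι X i).hom), ?_⟩
  calc (Limits.Sigma.desc κ).hom.app _ (yonedaEquiv ((x ≫ Limits.Sigma.ι X i).hom))
      = yonedaEquiv ((x ≫ Limits.Sigma.ι X i).hom ≫ (Limits.Sigma.desc κ).hom) :=
        (yonedaEquiv_comp _ _).symm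
    _ = yonedaEquiv (((x ≫ Limits.Sigma.ι X i) ≫ Limits.Sigma.desc κ).hom) := by
        rfl
    _ = yonedaEquiv ((x ≫ κ i).hom) := by rw [Category.assoc, Limits.Sigma.ι_desc]
    _ = yonedaEquiv ((yoMap J hs r ≫ (⟨yonedaEquiv.symm y⟩ : yo J hs V ⟶ Y)).hom) := by
        rw [hx]
    _ = Y.val.map r.op (yonedaEquiv (yonedaEquiv.symm y)) :=
        yonedaEquiv_val_yoMap_comp hs r _
    _ = Y.val.map r.op y := by rw [Equiv.apply_symm_apply]

lemma covSieve_mem_of_epi {X Y : Sheaf J (Type u)} (ψ : X ⟶ Y) (hψ : Epi ψ)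
    (V : C) (s : yo J hs V ⟶ Y) :
    covSieve hs (fun _ : PUnit.{u+1} => X) (fun _ => ψ) s ∈ J V := by
  rw [← Sheaf.isLocallySurjective_iff_epi] at hψ
  refine J.superset_covering ?_ (hψ.imageSieve_mem (yonedaEquiv s.hom))
  rintro V' r ⟨a, ha⟩
  refine ⟨⟨⟩, ⟨yonedaEquiv.symm a⟩, Sheaf.hom_ext (yonedaEquiv.injective ?_)⟩
  calc yonedaEquiv (((⟨yonedaEquiv.symm a⟩ : yo J hs V' ⟶ X) ≫ ψ).hom)
      = ψ.hom.app _ (yonedaEquiv (yonedaEquiv.symm a)) := by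
        rw [ObjectProperty.FullSubcategory.comp_hom]; exact yonedaEquiv_comp _ _
    _ = ψ.hom.app _ a := by rw [Equiv.apply_symm_apply]
    _ = Y.val.map r.op (yonedaEquiv s.hom) := ha
    _ = yonedaEquiv ((yoMap J hs r ≫ s).hom) := (yonedaEquiv_val_yoMap_comp hs r s).symm

lemma covSieve_sigma_mem {I : Type u} (X : I → Sheaf J (Type u)) (V : C)
    (c : yo J hs V ⟶ ∐ X) :
    covSieve hs X (fun i => Limits.Sigma.ι X i) c ∈ J V := by
  classical
  let Xp : I → (Cᵒᵖ ⥤ Type u) := fun i => (X i).val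
  let θ : (∐ Xp) ⟶ (∐ X).val := Limits.Sigma.desc (fun i => (Limits.Sigma.ι X i).hom)
  have hι : ∀ i, Limits.Sigma.ι Xp i ≫ θ = (Limits.Sigma.ι X i).hom := fun i => Limits.Sigma.ι_desc _ _
  have hW : J.W θ := by
    intro Z hZ
    constructor
    · intro a b hab
      have hab' : θ ≫ a = θ ≫ b := hab
      have : (⟨a⟩ : (∐ X) ⟶ ⟨Z, hZ⟩) = ⟨b⟩ := by
        refine Limits.Sigma.hom_ext (f := X) _ _ fun i => ?_
        apply Sheaf.hom_ext
        rw [ObjectProperty.FullSubcategory.comp_hom, ObjectProperty.FullSubcategory.comp_hom,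
          ← hι i, Category.assoc, Category.assoc, hab']
      exact congrArg InducedCategory.Hom.hom this
    · intro u
      refine ⟨(Limits.Sigma.desc (fun i => (⟨Limits.Sigma.ι Xp i ≫ u⟩ : X i ⟶ ⟨Z, hZ⟩)) : (∐ X) ⟶ ⟨Z, hZ⟩).hom, ?_⟩
      show θ ≫ _ = u
      refine Limits.Sigma.hom_ext (f := Xp) _ _ fun i => ?_
      rw [← Category.assoc, hι i, ← ObjectProperty.FullSubcategory.comp_hom, Limits.Sigma.ι_desc]
  have hls : Presheaf.IsLocallySurjective J θ := hW.isLocallySurjective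
  refine J.superset_covering ?_ (hls.imageSieve_mem (yonedaEquiv c.hom))
  rintro V' r ⟨d, hd⟩
  obtain ⟨⟨i⟩, b, hb⟩ := Types.jointly_surjective'
    ((colimitObjIsoColimitCompEvaluation (Discrete.functor Xp) (op V')).hom d)
  have hdb : (Limits.Sigma.ι Xp i).app (op V') b = d := by
    have h2 := ConcreteCategory.congr_hom
      (colimitObjIsoColimitCompEvaluation_ι_inv (Discrete.functor Xp) ⟨i⟩ (op V')) b
    simp only [types_comp_apply] at h2
    show (colimit.ι (Discrete.functor Xp) ⟨i⟩).app (op V') b = d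
    rw [← h2, hb]
    simp
  refine ⟨i, ⟨yonedaEquiv.symm b⟩, Sheaf.hom_ext (yonedaEquiv.injective ?_)⟩
  calc yonedaEquiv (((⟨yonedaEquiv.symm b⟩ : yo J hs V' ⟶ X i) ≫ Limits.Sigma.ι X i).hom)
      = (Limits.Sigma.ι X i).hom.app _ (yonedaEquiv (yonedaEquiv.symm b)) := by
        rw [ObjectProperty.FullSubcategory.comp_hom]; exact yonedaEquiv_comp _ _
    _ = (Limits.Sigma.ι X i).hom.app _ b := by rw [Equiv.apply_symm_apply]
    _ = θ.app _ ((Limits.Sigma.ι Xp i).app _ b) := by rw [← hι i]; rfl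
    _ = θ.app _ d := by rw [hdb]
    _ = (∐ X).val.map r.op (yonedaEquiv c.hom) := hd
    _ = yonedaEquiv ((yoMap J hs r ≫ c).hom) := (yonedaEquiv_val_yoMap_comp hs r c).symm

end Aux

end GeomCtx


open GeomCtx in
/-- A morphism of sheaves `f : F ⟶ h_U` is an open immersion iff it is a monomorphism
and its image, as a subobject of `h_U`, coincides with the image of `∐ h_{U_i} ⟶ h_U`
for some family of `P`-morphisms `(U_i ⟶ U)`. -/
theorem statement5 {C : Type u} [SmallCategory C] (J : GrothendieckTopology C)
    (P : MorphismProperty C) (hGC : IsGeometricContext J P)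
    {F : Sheaf J (Type u)} {U : C} (f : F ⟶ yo J hGC.subcanonical U) :
    IsOpenImmersion J P hGC.subcanonical f ↔
      (Mono f ∧ ∃ (I : Type u) (Ui : I → C) (ρ : ∀ i, Ui i ⟶ U),
        (∀ i, P (ρ i)) ∧
        SameImage J f (Limits.Sigma.desc fun i => yoMap J hGC.subcanonical (ρ i))) := by
  have hs : Subcanonical J := hGC.subcanonical
  constructor
  · rintro h
    obtain ⟨hm, I, Ui, ρ, hP, hSame⟩ := h U (𝟙 _)
    have hpb : IsPullback (𝟙 F) f f (𝟙 (yo J hGC.subcanonical U)) := IsPullback.of_id_fst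
    have hsnd : hpb.isoPullback.hom ≫ pullback.snd f (𝟙 _) = f := hpb.isoPullback_hom_snd
    constructor
    · haveI := hm
      rw [← hsnd]
      exact mono_comp _ _
    · obtain ⟨W, iW, pp, qq, hmW, hepp, heqq, hppi, hqqi⟩ := hSame
      refine ⟨I, Ui, ρ, hP, W, iW, hpb.isoPullback.hom ≫ qq, pp, hmW, ?_, hepp, ?_, hppi⟩
      · haveI := heqq; exact epi_comp _ _
      · rw [Category.assoc, hqqi, hsnd]
  · rintro ⟨hm, I, Ui, ρ, hP, W, iW, pp, qq, hmW, hepp, heqq, hppi, hqqi⟩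
    intro U' g
    haveI := hm
    refine ⟨inferInstance, ?_⟩
    set φ : U' ⟶ U := yoneda.preimage g.hom with hφdef
    have hφ : yoMap J hs φ = g := Sheaf.hom_ext (yoneda.map_preimage g.hom)
    haveI : Mono (pp ≫ iW) := by rwa [hppi]
    haveI : Mono pp := mono_of_mono pp iW
    haveI := hepp
    haveI : IsIso pp := isIso_of_mono_of_epi pp
    let D := ∐ (fun i => yo J hGC.subcanonical (Ui i))
    let e : D ⟶ F := qq ≫ inv pp
    haveI : Epi e := by haveI := heqq; exact epi_comp _ _
    have he : e ≫ f = Limits.Sigma.desc (fun i => yoMap J hGC.subcanonical (ρ i)) := by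
      show (qq ≫ inv pp) ≫ f = _
      rw [← hppi, Category.assoc, IsIso.inv_hom_id_assoc, hqqi]
    choose K Wc σ hcov hPσ hcart using fun i => hGC.locallyCartesian (ρ i) (hP i)
    have hpb' : ∀ i (j : K i), HasPullback (σ i j ≫ ρ i) φ := fun i j => hcart i j φ
    let Z : ∀ i, K i → C := fun i j => @pullback _ _ _ _ _ (σ i j ≫ ρ i) φ (hpb' i j)
    let zfst : ∀ i (j : K i), Z i j ⟶ Wc i j := fun i j =>
      @pullback.fst _ _ _ _ _ (σ i j ≫ ρ i) φ (hpb' i j)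
    let zsnd : ∀ i (j : K i), Z i j ⟶ U' := fun i j =>
      @pullback.snd _ _ _ _ _ (σ i j ≫ ρ i) φ (hpb' i j)
    have hzpb : ∀ i (j : K i), IsPullback (zfst i j) (zsnd i j) (σ i j ≫ ρ i) φ := fun i j =>
      @IsPullback.of_hasPullback _ _ _ _ _ (σ i j ≫ ρ i) φ (hpb' i j)
    have hPz : ∀ i (j : K i), P (zsnd i j) := fun i j =>
      hGC.stableUnderBaseChange (zsnd i j) (zfst i j) φ (σ i j ≫ ρ i) (hzpb i j).flip
        (hGC.stableUnderComposition _ _ (hPσ i j) (hP i))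
    have hcomm : ∀ i (j : K i),
        (yoMap J hs (zfst i j) ≫ yoMap J hs (σ i j) ≫
          Limits.Sigma.ι (fun i => yo J hGC.subcanonical (Ui i)) i ≫ e) ≫ f
          = yoMap J hs (zsnd i j) ≫ g := by
      intro i j
      simp only [Category.assoc]
      rw [he, Limits.Sigma.ι_desc]
      show yoMap J hs (zfst i j) ≫ yoMap J hs (σ i j) ≫ yoMap J hs (ρ i) = _
      rw [← yoMap_comp hs (σ i j) (ρ i), ← yoMap_comp hs (zfst i j), (hzpb i j).w,
        yoMap_comp hs, hφ]
    let comp : ∀ (k : Σ i, K i), yo J hGC.subcanonical (Z k.1 k.2) ⟶ pullback f g := fun k =>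
      pullback.lift (yoMap J hs (zfst k.1 k.2) ≫ yoMap J hs (σ k.1 k.2) ≫
          Limits.Sigma.ι (fun i => yo J hGC.subcanonical (Ui i)) k.1 ≫ e)
        (yoMap J hs (zsnd k.1 k.2)) (hcomm k.1 k.2)
    have hcf : ∀ i (j : K i), comp ⟨i, j⟩ ≫ pullback.fst f g =
        yoMap J hs (zfst i j) ≫ yoMap J hs (σ i j) ≫
          Limits.Sigma.ι (fun i => yo J hGC.subcanonical (Ui i)) i ≫ e := fun i j =>
      pullback.lift_fst _ _ _
    have hcs : ∀ i (j : K i), comp ⟨i, j⟩ ≫ pullback.snd f g = yoMap J hs (zsnd i j) :=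
      fun i j => pullback.lift_snd _ _ _
    have hepi : Epi (Limits.Sigma.desc comp) := by
      apply epi_desc_of_covSieve hs
      intro V s
      set τ : V ⟶ U' := yoneda.preimage (s ≫ pullback.snd f g).hom with hτdef
      have hτ : yoMap J hs τ = s ≫ pullback.snd f g := Sheaf.hom_ext (yoneda.map_preimage _)
      have hS1 := covSieve_mem_of_epi hs e inferInstance V (s ≫ pullback.fst f g)
      refine J.transitive hS1 _ ?_
      intro V₁ r hr1
      obtain ⟨pu, c, hc⟩ := hr1
      have hS2 := covSieve_sigma_mem hs (fun i => yo J hGC.subcanonical (Ui i)) V₁ c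
      refine J.transitive hS2 _ ?_
      rintro V₂ r' ⟨i, x, hx⟩
      set α : V₂ ⟶ Ui i := yoneda.preimage x.hom with hαdef
      have hα : yoMap J hs α = x := Sheaf.hom_ext (yoneda.map_preimage _)
      have hS3 := J.pullback_stable α (hcov i)
      refine J.superset_covering ?_ hS3
      rintro V₃ r'' ⟨W₃, b, m', hm', hfac⟩
      cases hm' with
      | mk j =>
      have h1 : yoMap J hs (ρ i) =
          Limits.Sigma.ι (fun i => yo J hGC.subcanonical (Ui i)) i ≫ e ≫ f := by
        rw [he, Limits.Sigma.ι_desc]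
      have hkey : α ≫ ρ i = r' ≫ r ≫ τ ≫ φ := by
        apply yoMap_injective hs
        rw [yoMap_comp hs, hα, h1, ← Category.assoc, hx, Category.assoc,
          ← Category.assoc c e f, hc]
        simp only [yoMap_comp hs, Category.assoc, hτ, hφ, pullback.condition]
      have w3 : b ≫ σ i j ≫ ρ i = (((r'' ≫ r') ≫ r) ≫ τ) ≫ φ := by
        rw [← Category.assoc, hfac]
        simp only [Category.assoc, hkey]
      let z : V₃ ⟶ Z i j := (hzpb i j).lift b (((r'' ≫ r') ≫ r) ≫ τ)
        (by simpa only [Category.assoc] using w3)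
      have hz1 : z ≫ zfst i j = b := (hzpb i j).lift_fst _ _ _
      have hz2 : z ≫ zsnd i j = ((r'' ≫ r') ≫ r) ≫ τ := (hzpb i j).lift_snd _ _ _
      have goal1 : (yoMap J hs z ≫ comp ⟨i, j⟩) ≫ pullback.fst f g =
          (yoMap J hs ((r'' ≫ r') ≫ r) ≫ s) ≫ pullback.fst f g := by
        rw [Category.assoc, hcf i j, ← Category.assoc, ← yoMap_comp hs, hz1,
          ← Category.assoc, ← yoMap_comp hs, hfac, yoMap_comp hs, Category.assoc,
          Category.assoc, hα, ← Category.assoc x _ e, hx]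
        simp only [yoMap_comp hs, Category.assoc, hc]
      have goal2 : (yoMap J hs z ≫ comp ⟨i, j⟩) ≫ pullback.snd f g =
          (yoMap J hs ((r'' ≫ r') ≫ r) ≫ s) ≫ pullback.snd f g := by
        rw [Category.assoc, hcs i j, ← yoMap_comp hs, hz2]
        simp only [yoMap_comp hs, Category.assoc, hτ]
      exact ⟨⟨i, j⟩, yoMap J hs z, pullback.hom_ext goal1 goal2⟩
    refine ⟨Σ i, K i, fun k => Z k.1 k.2, fun k => zsnd k.1 k.2, fun k => hPz k.1 k.2,
      pullback f g, pullback.snd f g, Limits.Sigma.desc comp, 𝟙 _, inferInstance, hepi,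
      inferInstance, ?_, Category.id_comp _⟩
    refine Limits.Sigma.hom_ext _ _ fun k => ?_
    rw [← Category.assoc, Limits.Sigma.ι_desc, Limits.Sigma.ι_desc]
    exact hcs k.1 k.2
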